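/- Let G : ℕ × Bool → ℚ with G 0 false = G₀. Suppose G satisfies the genus-addition property: for all h₁, h₂ ∈ ℕ and parities p₁, p₂, G (h₁+h₂) (p₁ xor p₂) = ε p₁ · 2^{h₁} · G h₂ p₂ + ε p₂ · 2^{h₂} · G h₁ p₁ - ε (p₁ xor p₂) · 2^{h₁+h₂} · G₀. Suppose moreover G 1 true = -G 1 false and G 1 false = 2·G₀. Then for all h ≥ 0 and all parities p, G h p = ε p · 2^h · G₀. -/
import Mathlib

/-- If G satisfies the genus-addition sum formula, G 1 true = -G 1 false and
G 1 false = 2·G₀, then G h p = ε p · 2^h · G₀ for all h and p. -/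
theorem stmt_4 (G : ℕ → Bool → ℚ) (G₀ : ℚ)
    (ε : Bool → ℚ) (hε : ε = fun p => if p then (-1 : ℚ) else 1)
    (h0 : G 0 false = G₀)
    (hsum : ∀ (h₁ h₂ : ℕ) (p₁ p₂ : Bool),
      G (h₁ + h₂) (xor p₁ p₂) =
        ε p₁ * 2 ^ h₁ * G h₂ p₂ + ε p₂ * 2 ^ h₂ * G h₁ p₁
          - ε (xor p₁ p₂) * 2 ^ (h₁ + h₂) * G₀)
    (hodd : G 1 true = -G 1 false)
    (h1 : G 1 false = 2 * G₀) :
    ∀ (h : ℕ) (p : Bool), G h p = ε p * 2 ^ h * G₀ := by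
  subst hε
  have h0t : G 0 true = -G₀ := by
    have := hsum 0 0 true true
    simp at this
    linarith
  intro h
  induction h with
  | zero => intro p; cases p <;> simp [h0, h0t]
  | succ n ih =>
    intro p
    have key := hsum n 1 p false
    simp only [Bool.xor_false] at key
    cases p <;> simp_all <;> ring_nf
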